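/- arXiv:2510.23586 — 3 statements merged into one kernel-verified Lean document; each statement's English description precedes it below -/
import Mathlib

section
/- Let q : V → W be a surjection of finite bus sets. Then the optimal value (infimum of total cost over feasible points) of the aggregated pipe-and-bubble model induced by q is less than or equal to the optimal value of the nodal pipe-and-bubble model; i.e., spatial aggregation by merging buses, relocating generators and loads to merged buses, and summing line ratings between zones while deleting intra-zone line limits, yields a relaxation (lower bound) of the nodal capacity expansion operational problem. -/
/-!
Given a feasible nodal dispatch `(g, s, f)`, keep `g` and `s` and let the flow from zone `w` to
zone `w'` be the total nodal flow on lines from `w` to `w'`. Antisymmetry of `f` makes the zonal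
flow antisymmetric and kills intra-zone flow, the triangle inequality bounds it by the summed
ratings, and summing the nodal balance equations over a zone gives the zonal balance. So every
nodal cost is an aggregated cost, and the aggregated infimum is at most the nodal one.
-/

open Finset

namespace PipeAndBubble

variable {V W : Type*} [Fintype V] [DecidableEq W]

/-- Applied to line ratings this is the zonal rating `Ũ` off the diagonal; applied to nodal flows
it is the zonal flow. -/
def aggregate {M : Type*} [AddCommMonoid M] (q : V → W) (f : V × V → M) (e : W × W) : M :=
  ∑ u : V, ∑ v : V, if q u = e.1 ∧ q v = e.2 then f (u, v) else 0

theorem aggregate_antisymm {M : Type*} [AddCommGroup M] (q : V → W) {f : V × V → M}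
    (hf : ∀ u v, f (u, v) = -f (v, u)) (w w' : W) :
    aggregate q f (w, w') = -aggregate q f (w', w) := by
  rw [aggregate, aggregate, sum_comm, ← sum_neg_distrib]
  refine sum_congr rfl fun v _ => ?_
  rw [← sum_neg_distrib]
  refine sum_congr rfl fun u _ => ?_
  by_cases hu : q u = w <;> by_cases hv : q v = w' <;> simp [hu, hv, hf u v]

theorem aggregate_diag_eq_zero (q : V → W) {f : V × V → ℝ}
    (hf : ∀ u v, f (u, v) = -f (v, u)) (w : W) : aggregate q f (w, w) = 0 := by
  have := aggregate_antisymm q hf w w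
  linarith

theorem abs_aggregate_le {M : Type*} [AddCommGroup M] [LinearOrder M] [IsOrderedAddMonoid M]
    (q : V → W) {f U : V × V → M} (hf : ∀ u v, |f (u, v)| ≤ U (u, v)) (e : W × W) :
    |aggregate q f e| ≤ aggregate q U e := by
  refine (abs_sum_le_sum_abs _ _).trans (sum_le_sum fun u _ => ?_)
  refine (abs_sum_le_sum_abs _ _).trans (sum_le_sum fun v _ => ?_)
  split_ifs
  · exact hf u v
  · simp

theorem abs_aggregate_le_ite (q : V → W) {f U : V × V → ℝ}
    (hf : ∀ u v, f (u, v) = -f (v, u)) (hU : ∀ u v, |f (u, v)| ≤ U (u, v)) (w w' : W) :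
    |aggregate q f (w, w')| ≤ if w = w' then 0 else aggregate q U (w, w') := by
  split_ifs with h
  · simp [h, aggregate_diag_eq_zero q hf]
  · exact abs_aggregate_le q hU _

variable [Fintype W]

theorem sum_aggregate_inflow {M : Type*} [AddCommMonoid M] (q : V → W) (f : V × V → M)
    (w : W) :
    ∑ w' : W, aggregate q f (w', w) = ∑ v : V, if q v = w then ∑ u : V, f (u, v) else 0 := by
  simp only [aggregate, ite_and]
  rw [sum_comm]
  simp only [sum_ite_irrel, sum_const_zero, sum_ite_eq, mem_univ, if_true]
  rw [sum_comm]
  simp only [ite_sum_zero]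

theorem zonal_balance_of_nodal_balance {M : Type*} [AddCommGroup M] (q : V → W)
    {x : V → M} {f : V × V → M} (h : ∀ v, x v + ∑ u : V, f (u, v) = 0) (w : W) :
    (∑ v : V, if q v = w then x v else 0) + ∑ w' : W, aggregate q f (w', w) = 0 := by
  rw [sum_aggregate_inflow, ← sum_add_distrib]
  refine sum_eq_zero fun v _ => ?_
  split_ifs
  · exact h v
  · exact add_zero 0

end PipeAndBubble

open PipeAndBubble

theorem aggregated_model_is_relaxation_general
    {V W : Type*} [Fintype V] [Fintype W] [DecidableEq W]
    (q : V → W)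
    (d gbar c : V → ℝ) (p : ℝ) (U : V × V → ℝ)
    (hd : ∀ v, 0 ≤ d v) (hgbar : ∀ v, 0 ≤ gbar v)
    (hc : ∀ v, 0 ≤ c v) (hp : 0 ≤ p)
    (hUnonneg : ∀ u v, 0 ≤ U (u, v)) :
    sInf { t : ℝ | ∃ (g s : V → ℝ) (F : W × W → ℝ),
        (∀ v, 0 ≤ g v ∧ g v ≤ gbar v) ∧
        (∀ v, 0 ≤ s v ∧ s v ≤ d v) ∧
        (∀ w w', F (w, w') = - F (w', w)) ∧
        (∀ w w', |F (w, w')| ≤ (if w = w' then 0 else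
            ∑ u : V, ∑ v : V, if q u = w ∧ q v = w' then U (u, v) else 0)) ∧
        (∀ w : W, (∑ v : V, if q v = w then g v + s v - d v else 0)
            + (∑ w' : W, F (w', w)) = 0) ∧
        t = ∑ v : V, (c v * g v + p * s v) }
    ≤ sInf { t : ℝ | ∃ (g s : V → ℝ) (f : V × V → ℝ),
        (∀ v, 0 ≤ g v ∧ g v ≤ gbar v) ∧
        (∀ v, 0 ≤ s v ∧ s v ≤ d v) ∧
        (∀ u v, f (u, v) = - f (v, u)) ∧
        (∀ u v, |f (u, v)| ≤ U (u, v)) ∧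
        (∀ v : V, g v + s v + (∑ u : V, f (u, v)) = d v) ∧
        t = ∑ v : V, (c v * g v + p * s v) } := by
  apply csInf_le_csInf
  · refine ⟨0, ?_⟩
    rintro t ⟨g, s, F, hg, hs, -, -, -, rfl⟩
    exact sum_nonneg fun v _ => add_nonneg (mul_nonneg (hc v) (hg v).1) (mul_nonneg hp (hs v).1)
  · exact ⟨_, 0, d, 0, fun v => ⟨le_rfl, hgbar v⟩, fun v => ⟨hd v, le_rfl⟩, by simp,
      by simpa using hUnonneg, by simp, rfl⟩
  · rintro t ⟨g, s, f, hg, hs, hanti, hcap, hbal, rfl⟩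
    exact ⟨g, s, aggregate q f, hg, hs, aggregate_antisymm q hanti,
      abs_aggregate_le_ite q hanti hcap,
      zonal_balance_of_nodal_balance q fun v => by linarith [hbal v], rfl⟩

/-- Spatial aggregation of the nodal pipe-and-bubble model by a
surjection `q : V → W` (merging buses, keeping generation/shedding at the
nodal level, summing inter-zone line ratings and deleting intra-zone limits)
yields a relaxation: the optimal value (infimum of total cost over feasible
points) of the aggregated model is at most that of the nodal model. -/
theorem aggregated_model_is_relaxation
    {V W : Type*} [Fintype V] [Fintype W] [DecidableEq W]
    (q : V → W) (hq : Function.Surjective q)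
    (d gbar c : V → ℝ) (p : ℝ) (U : V × V → ℝ)
    (hd : ∀ v, 0 ≤ d v) (hgbar : ∀ v, 0 ≤ gbar v)
    (hc : ∀ v, 0 ≤ c v) (hp : 0 ≤ p)
    (hUsymm : ∀ u v, U (u, v) = U (v, u))
    (hUnonneg : ∀ u v, 0 ≤ U (u, v))
    (hUdiag : ∀ v, U (v, v) = 0) :
    sInf { t : ℝ | ∃ (g s : V → ℝ) (F : W × W → ℝ),
        (∀ v, 0 ≤ g v ∧ g v ≤ gbar v) ∧
        (∀ v, 0 ≤ s v ∧ s v ≤ d v) ∧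
        (∀ w w', F (w, w') = - F (w', w)) ∧
        (∀ w w', |F (w, w')| ≤ (if w = w' then 0 else
            ∑ u : V, ∑ v : V, if q u = w ∧ q v = w' then U (u, v) else 0)) ∧
        (∀ w : W, (∑ v : V, if q v = w then g v + s v - d v else 0)
            + (∑ w' : W, F (w', w)) = 0) ∧
        t = ∑ v : V, (c v * g v + p * s v) }
    ≤ sInf { t : ℝ | ∃ (g s : V → ℝ) (f : V × V → ℝ),
        (∀ v, 0 ≤ g v ∧ g v ≤ gbar v) ∧
        (∀ v, 0 ≤ s v ∧ s v ≤ d v) ∧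
        (∀ u v, f (u, v) = - f (v, u)) ∧
        (∀ u v, |f (u, v)| ≤ U (u, v)) ∧
        (∀ v : V, g v + s v + (∑ u : V, f (u, v)) = d v) ∧
        t = ∑ v : V, (c v * g v + p * s v) } :=
  aggregated_model_is_relaxation_general q d gbar c p U hd hgbar hc hp hUnonneg
end

section
/- Let q : V → W be a surjection of finite bus sets and let (g, s, f) be any feasible point of the nodal pipe-and-bubble model. Define F : W × W → ℝ by F (w, w') = Σ over pairs (u,v) with q u = w and q v = w' of f (u, v). Then (g, s, F) is a feasible point of the aggregated pipe-and-bubble model induced by q, and its total cost equals the total cost of (g, s, f) in the nodal model. -/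
/-!
Summing `f` over the blocks `q⁻¹ w × q⁻¹ w'` preserves antisymmetry, and by the triangle
inequality the block sums are bounded by the block sums of `U`; on the diagonal, antisymmetry
forces `F (w, w) = 0`, matching the zero capacity there. The inflow of zone `w` is the total
nodal inflow of the buses in `q⁻¹ w`, so zonal balance is the sum of the nodal balances over
that zone.
-/

open Finset

section Aggregate

variable {V W M : Type*} [Fintype V] [DecidableEq W]

def aggregate [AddCommMonoid M] (q : V → W) (f : V × V → M) (x : W × W) : M :=
  ∑ u, ∑ v, if q u = x.1 ∧ q v = x.2 then f (u, v) else 0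

theorem aggregate_swap [AddCommGroup M] (q : V → W) {f : V × V → M}
    (hf : ∀ u v, f (u, v) = -f (v, u)) (w w' : W) :
    aggregate q f (w, w') = -aggregate q f (w', w) := by
  simp only [aggregate, ← sum_neg_distrib]
  rw [sum_comm]
  refine sum_congr rfl fun u _ => sum_congr rfl fun v _ => ?_
  simp only [and_comm (a := q v = w), hf v u]
  split_ifs <;> simp

theorem abs_aggregate_le (q : V → W) {f U : V × V → ℝ} (hfU : ∀ u v, |f (u, v)| ≤ U (u, v))
    (x : W × W) : |aggregate q f x| ≤ aggregate q U x := by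
  refine (abs_sum_le_sum_abs _ _).trans (sum_le_sum fun u _ => ?_)
  refine (abs_sum_le_sum_abs _ _).trans (sum_le_sum fun v _ => ?_)
  split_ifs
  · exact hfU u v
  · simp

theorem sum_aggregate_fst [Fintype W] [AddCommMonoid M] (q : V → W) (f : V × V → M) (w : W) :
    ∑ w', aggregate q f (w', w) = ∑ v, if q v = w then ∑ u, f (u, v) else 0 := by
  simp only [aggregate, ite_and]
  rw [sum_comm]
  simp only [sum_ite_irrel, sum_const_zero, sum_ite_eq, mem_univ, if_true]
  rw [sum_comm]
  simp only [ite_sum_zero]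

theorem sum_ite_add_sum_aggregate_eq_zero [Fintype W] [AddCommMonoid M] (q : V → W)
    {b : V → M} {f : V × V → M} (hbal : ∀ v, b v + ∑ u, f (u, v) = 0) (w : W) :
    (∑ v, if q v = w then b v else 0) + ∑ w', aggregate q f (w', w) = 0 := by
  rw [sum_aggregate_fst, ← sum_add_distrib]
  refine sum_eq_zero fun v _ => ?_
  split_ifs
  · exact hbal v
  · exact add_zero 0

end Aggregate

theorem nodal_solution_maps_to_aggregated_general
    {V W : Type*} [Fintype V] [Fintype W] [DecidableEq W]
    (q : V → W)
    (d c : V → ℝ) (p : ℝ) (U : V × V → ℝ)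
    -- a feasible point of the nodal model
    (g s : V → ℝ) (f : V × V → ℝ)
    (hanti : ∀ u v, f (u, v) = - f (v, u))
    (hcap : ∀ u v, |f (u, v)| ≤ U (u, v))
    (hbal : ∀ v : V, g v + s v + (∑ u : V, f (u, v)) = d v)
    -- the induced zonal flows
    (F : W × W → ℝ)
    (hF : ∀ w w', F (w, w') =
        ∑ u : V, ∑ v : V, if q u = w ∧ q v = w' then f (u, v) else 0) :
    -- feasibility of (g, s, F) in the aggregated model
    ((∀ w w', F (w, w') = - F (w', w)) ∧
     (∀ w w', |F (w, w')| ≤ (if w = w' then 0 else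
        ∑ u : V, ∑ v : V, if q u = w ∧ q v = w' then U (u, v) else 0)) ∧
     (∀ w : W, (∑ v : V, if q v = w then g v + s v - d v else 0)
        + (∑ w' : W, F (w', w)) = 0)) ∧
    -- equality of total costs
    (∑ v : V, (c v * g v + p * s v)) = (∑ v : V, (c v * g v + p * s v)) := by
  obtain rfl : F = aggregate q f := funext fun x => hF x.1 x.2
  refine ⟨⟨aggregate_swap q hanti, fun w w' => ?_, ?_⟩, rfl⟩
  · split_ifs with hww
    · subst hww
      exact abs_nonpos_iff.mpr (self_eq_neg.mp (aggregate_swap q hanti w w))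
    · exact abs_aggregate_le q hcap (w, w')
  · exact sum_ite_add_sum_aggregate_eq_zero q fun v => by linarith [hbal v]

/-- Given a surjection `q : V → W` and a feasible point `(g, s, f)`
of the nodal pipe-and-bubble model, the zonal flows
`F (w, w') = ∑_{q u = w, q v = w'} f (u, v)` together with the same `(g, s)`
form a feasible point of the aggregated model induced by `q`, with the same
total cost. -/
theorem nodal_solution_maps_to_aggregated
    {V W : Type*} [Fintype V] [Fintype W] [DecidableEq W]
    (q : V → W) (hq : Function.Surjective q)
    (d gbar c : V → ℝ) (p : ℝ) (U : V × V → ℝ)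
    (hd : ∀ v, 0 ≤ d v) (hgbar : ∀ v, 0 ≤ gbar v)
    (hc : ∀ v, 0 ≤ c v) (hp : 0 ≤ p)
    (hUsymm : ∀ u v, U (u, v) = U (v, u))
    (hUnonneg : ∀ u v, 0 ≤ U (u, v))
    (hUdiag : ∀ v, U (v, v) = 0)
    -- a feasible point of the nodal model
    (g s : V → ℝ) (f : V × V → ℝ)
    (hg : ∀ v, 0 ≤ g v ∧ g v ≤ gbar v)
    (hs : ∀ v, 0 ≤ s v ∧ s v ≤ d v)
    (hanti : ∀ u v, f (u, v) = - f (v, u))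
    (hcap : ∀ u v, |f (u, v)| ≤ U (u, v))
    (hbal : ∀ v : V, g v + s v + (∑ u : V, f (u, v)) = d v)
    -- the induced zonal flows
    (F : W × W → ℝ)
    (hF : ∀ w w', F (w, w') =
        ∑ u : V, ∑ v : V, if q u = w ∧ q v = w' then f (u, v) else 0) :
    -- feasibility of (g, s, F) in the aggregated model
    ((∀ w w', F (w, w') = - F (w', w)) ∧
     (∀ w w', |F (w, w')| ≤ (if w = w' then 0 else
        ∑ u : V, ∑ v : V, if q u = w ∧ q v = w' then U (u, v) else 0)) ∧
     (∀ w : W, (∑ v : V, if q v = w then g v + s v - d v else 0)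
        + (∑ w' : W, F (w', w)) = 0)) ∧
    -- equality of total costs
    (∑ v : V, (c v * g v + p * s v)) = (∑ v : V, (c v * g v + p * s v)) :=
  nodal_solution_maps_to_aggregated_general q d c p U g s f hanti hcap hbal F hF
end

section
/- Consider the two-stage stochastic pipe-and-bubble capacity expansion model with a finite scenario set Ω, probabilities p_ω ≥ 0 summing to 1, first-stage capacity investments x : V → ℝ with 0 ≤ x v ≤ x̄ v and linear investment costs k v ≥ 0, and, for each scenario ω, scenario loads d_ω v ≥ 0, availability factors α_ω v ∈ [0,1], generation bounds 0 ≤ g_ω v ≤ α_ω v · (ḡ v + x v), shedding 0 ≤ s_ω v ≤ d_ω v, antisymmetric flows bounded by the line ratings U, per-scenario power balance, and objective (Σ over v of k v · x v) + (Σ over ω of p_ω · Σ over v of (c v · g_ω v + p · s_ω v)). For any surjection q : V → W, the optimal value of the aggregated stochastic model—obtained by keeping investment, generation, and shedding variables indexed by V, enforcing power balance zonally over the fibers of q, and bounding zonal flows by the summed inter-zone ratings Ũ (w,w') = Σ over pairs (u,v) with q u = w, q v = w' of U (u,v)—is less than or equal to the optimal value of the nodal stochastic model. -/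
/-!
A nodal operating point induces an aggregated one with the same cost: keep `x`, `g`, `s` and let
the flow between two distinct zones be the total nodal flow from the first fibre to the second.
Antisymmetry makes the flows inside a fibre cancel, so summing the nodal balances over a fibre
gives the zonal balance, and the triangle inequality gives the summed-rating bound. Hence the
nodal objective values are among the aggregated ones; the latter are bounded below by `0` and
the former contain the point that sheds all load, so the infima compare.
-/

open Finset

section ZonalAggregation

variable {V W M : Type*} [Fintype V] [DecidableEq W]

def interZoneSum [AddCommMonoid M] (q : V → W) (f : V × V → M) (e : W × W) : M :=
  ∑ u, ∑ v, if q u = e.1 ∧ q v = e.2 then f (u, v) else 0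

def aggregateFlow [AddCommMonoid M] (q : V → W) (f : V × V → M) (e : W × W) : M :=
  if e.1 = e.2 then 0 else interZoneSum q f e

theorem sum_interZoneSum_fst [AddCommMonoid M] [Fintype W] (q : V → W) (f : V × V → M)
    (w : W) :
    ∑ w', interZoneSum q f (w', w) = ∑ v, if q v = w then ∑ u, f (u, v) else 0 := by
  calc ∑ w', interZoneSum q f (w', w)
      = ∑ u, ∑ v, ∑ w', if q u = w' ∧ q v = w then f (u, v) else 0 := by
        unfold interZoneSum
        rw [sum_comm]
        exact sum_congr rfl fun u _ => sum_comm
    _ = ∑ v, ∑ u, if q v = w then f (u, v) else 0 := by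
        rw [sum_comm]
        simp only [ite_and, sum_ite_eq, mem_univ, if_true]
    _ = _ := by simp only [sum_ite_irrel, sum_const_zero]

section Group

variable [AddCommGroup M] {q : V → W} {f : V × V → M}

theorem interZoneSum_swap (hf : ∀ u v, f (u, v) = -f (v, u)) (w w' : W) :
    interZoneSum q f (w, w') = -interZoneSum q f (w', w) := by
  simp only [interZoneSum, ← sum_neg_distrib]
  rw [sum_comm]
  refine sum_congr rfl fun u _ => sum_congr rfl fun v _ => ?_
  simp only [and_comm (a := q u = w'), hf u v]
  split_ifs <;> simp

theorem aggregateFlow_swap (hf : ∀ u v, f (u, v) = -f (v, u)) (w w' : W) :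
    aggregateFlow q f (w, w') = -aggregateFlow q f (w', w) := by
  by_cases h : w = w'
  · simp [aggregateFlow, h]
  · simp [aggregateFlow, h, Ne.symm h, interZoneSum_swap hf w w']

theorem interZoneSum_self [IsAddTorsionFree M] (hf : ∀ u v, f (u, v) = -f (v, u)) (w : W) :
    interZoneSum q f (w, w) = 0 :=
  self_eq_neg.mp (interZoneSum_swap hf w w)

theorem sum_aggregateFlow_fst [IsAddTorsionFree M] [Fintype W]
    (hf : ∀ u v, f (u, v) = -f (v, u)) (w : W) :
    ∑ w', aggregateFlow q f (w', w) = ∑ v, if q v = w then ∑ u, f (u, v) else 0 := by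
  rw [← sum_interZoneSum_fst]
  refine sum_congr rfl fun w' _ => ?_
  by_cases h : w' = w
  · simp [aggregateFlow, h, interZoneSum_self hf]
  · simp [aggregateFlow, h]

theorem aggregateFlow_balance [IsAddTorsionFree M] [Fintype W]
    (hf : ∀ u v, f (u, v) = -f (v, u)) {g s d : V → M}
    (hbal : ∀ v, g v + s v + ∑ u, f (u, v) = d v) (w : W) :
    (∑ v, if q v = w then g v + s v - d v else 0) + ∑ w', aggregateFlow q f (w', w) = 0 := by
  rw [sum_aggregateFlow_fst hf, ← sum_add_distrib]
  refine sum_eq_zero fun v _ => ?_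
  split_ifs
  · rw [← hbal v]; abel
  · simp

end Group

theorem abs_interZoneSum_le [AddCommGroup M] [LinearOrder M] [IsOrderedAddMonoid M]
    {q : V → W} {f U : V × V → M} (hfU : ∀ u v, |f (u, v)| ≤ U (u, v)) (e : W × W) :
    |interZoneSum q f e| ≤ interZoneSum q U e := by
  refine (abs_sum_le_sum_abs _ _).trans <| sum_le_sum fun u _ => ?_
  refine (abs_sum_le_sum_abs _ _).trans <| sum_le_sum fun v _ => ?_
  split_ifs
  · exact hfU u v
  · simp

theorem abs_aggregateFlow_le [AddCommGroup M] [LinearOrder M] [IsOrderedAddMonoid M]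
    {q : V → W} {f U : V × V → M} (hfU : ∀ u v, |f (u, v)| ≤ U (u, v)) (e : W × W) :
    |aggregateFlow q f e| ≤ aggregateFlow q U e := by
  unfold aggregateFlow
  split_ifs
  · simp
  · exact abs_interZoneSum_le hfU e

end ZonalAggregation

theorem aggregated_stochastic_model_is_relaxation_general
    {V W Ω : Type*} [Fintype V] [Fintype W] [Fintype Ω] [DecidableEq W]
    (q : V → W) (prob : Ω → ℝ) (hprob : ∀ ω, 0 ≤ prob ω)
    (xbar k gbar c : V → ℝ) (p : ℝ)
    (d : Ω → V → ℝ) (α : Ω → V → ℝ) (U : V × V → ℝ)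
    (hxbar : ∀ v, 0 ≤ xbar v) (hk : ∀ v, 0 ≤ k v)
    (hgbar : ∀ v, 0 ≤ gbar v) (hc : ∀ v, 0 ≤ c v) (hp : 0 ≤ p)
    (hd : ∀ ω v, 0 ≤ d ω v)
    (hα : ∀ ω v, 0 ≤ α ω v ∧ α ω v ≤ 1)
    (hUnonneg : ∀ u v, 0 ≤ U (u, v)) :
    sInf { t : ℝ | ∃ (x : V → ℝ) (g s : Ω → V → ℝ) (F : Ω → W × W → ℝ),
        (∀ v, 0 ≤ x v ∧ x v ≤ xbar v) ∧
        (∀ ω v, 0 ≤ g ω v ∧ g ω v ≤ α ω v * (gbar v + x v)) ∧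
        (∀ ω v, 0 ≤ s ω v ∧ s ω v ≤ d ω v) ∧
        (∀ ω w w', F ω (w, w') = - F ω (w', w)) ∧
        (∀ ω w w', |F ω (w, w')| ≤ (if w = w' then 0 else
            ∑ u : V, ∑ v : V, if q u = w ∧ q v = w' then U (u, v) else 0)) ∧
        (∀ ω (w : W), (∑ v : V, if q v = w then g ω v + s ω v - d ω v else 0)
            + (∑ w' : W, F ω (w', w)) = 0) ∧
        t = (∑ v : V, k v * x v)
            + ∑ ω : Ω, prob ω * ∑ v : V, (c v * g ω v + p * s ω v) }
    ≤ sInf { t : ℝ | ∃ (x : V → ℝ) (g s : Ω → V → ℝ) (f : Ω → V × V → ℝ),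
        (∀ v, 0 ≤ x v ∧ x v ≤ xbar v) ∧
        (∀ ω v, 0 ≤ g ω v ∧ g ω v ≤ α ω v * (gbar v + x v)) ∧
        (∀ ω v, 0 ≤ s ω v ∧ s ω v ≤ d ω v) ∧
        (∀ ω u v, f ω (u, v) = - f ω (v, u)) ∧
        (∀ ω u v, |f ω (u, v)| ≤ U (u, v)) ∧
        (∀ ω (v : V), g ω v + s ω v + (∑ u : V, f ω (u, v)) = d ω v) ∧
        t = (∑ v : V, k v * x v)
            + ∑ ω : Ω, prob ω * ∑ v : V, (c v * g ω v + p * s ω v) } := by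
  refine csInf_le_csInf ⟨0, ?_⟩ ⟨_, 0, 0, d, 0, ?_, ?_, ?_, ?_, ?_, ?_, rfl⟩ ?_
  · rintro t ⟨x, g, s, F, hx, hg, hs, -, -, -, rfl⟩
    refine add_nonneg (sum_nonneg fun v _ => mul_nonneg (hk v) (hx v).1)
      (sum_nonneg fun ω _ => mul_nonneg (hprob ω) (sum_nonneg fun v _ => ?_))
    exact add_nonneg (mul_nonneg (hc v) (hg ω v).1) (mul_nonneg hp (hs ω v).1)
  · exact fun v => ⟨le_rfl, hxbar v⟩
  · exact fun ω v => ⟨le_rfl, mul_nonneg (hα ω v).1 (by simpa using hgbar v)⟩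
  · exact fun ω v => ⟨hd ω v, le_rfl⟩
  · simp
  · exact fun _ => by simpa using hUnonneg
  · simp
  · rintro t ⟨x, g, s, f, hx, hg, hs, hanti, hcap, hbal, rfl⟩
    exact ⟨x, g, s, fun ω => aggregateFlow q (f ω), hx, hg, hs,
      fun ω w w' => aggregateFlow_swap (hanti ω) w w',
      -- the zonal rating in the statement unfolds to `aggregateFlow q U (w, w')`
      fun ω w w' => abs_aggregateFlow_le (hcap ω) (w, w'),
      fun ω w => aggregateFlow_balance (hanti ω) (hbal ω) w, rfl⟩

/-- For the two-stage stochastic pipe-and-bubble capacity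
expansion model with finite scenario set `Ω`, first-stage investments
`x : V → ℝ` and per-scenario operations, spatial aggregation by a surjection
`q : V → W` (keeping investment, generation and shedding at the nodal level,
enforcing power balance zonally over the fibers of `q`, and bounding zonal
flows by the summed inter-zone ratings) is a relaxation: its optimal value is
at most the optimal value of the nodal stochastic model. -/
theorem aggregated_stochastic_model_is_relaxation
    {V W Ω : Type*} [Fintype V] [Fintype W] [Fintype Ω] [DecidableEq W]
    (q : V → W) (hq : Function.Surjective q)
    (prob : Ω → ℝ) (hprob : ∀ ω, 0 ≤ prob ω) (hprobsum : ∑ ω : Ω, prob ω = 1)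
    (xbar k gbar c : V → ℝ) (p : ℝ)
    (d : Ω → V → ℝ) (α : Ω → V → ℝ) (U : V × V → ℝ)
    (hxbar : ∀ v, 0 ≤ xbar v) (hk : ∀ v, 0 ≤ k v)
    (hgbar : ∀ v, 0 ≤ gbar v) (hc : ∀ v, 0 ≤ c v) (hp : 0 ≤ p)
    (hd : ∀ ω v, 0 ≤ d ω v)
    (hα : ∀ ω v, 0 ≤ α ω v ∧ α ω v ≤ 1)
    (hUsymm : ∀ u v, U (u, v) = U (v, u))
    (hUnonneg : ∀ u v, 0 ≤ U (u, v))
    (hUdiag : ∀ v, U (v, v) = 0) :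
    sInf { t : ℝ | ∃ (x : V → ℝ) (g s : Ω → V → ℝ) (F : Ω → W × W → ℝ),
        (∀ v, 0 ≤ x v ∧ x v ≤ xbar v) ∧
        (∀ ω v, 0 ≤ g ω v ∧ g ω v ≤ α ω v * (gbar v + x v)) ∧
        (∀ ω v, 0 ≤ s ω v ∧ s ω v ≤ d ω v) ∧
        (∀ ω w w', F ω (w, w') = - F ω (w', w)) ∧
        (∀ ω w w', |F ω (w, w')| ≤ (if w = w' then 0 else
            ∑ u : V, ∑ v : V, if q u = w ∧ q v = w' then U (u, v) else 0)) ∧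
        (∀ ω (w : W), (∑ v : V, if q v = w then g ω v + s ω v - d ω v else 0)
            + (∑ w' : W, F ω (w', w)) = 0) ∧
        t = (∑ v : V, k v * x v)
            + ∑ ω : Ω, prob ω * ∑ v : V, (c v * g ω v + p * s ω v) }
    ≤ sInf { t : ℝ | ∃ (x : V → ℝ) (g s : Ω → V → ℝ) (f : Ω → V × V → ℝ),
        (∀ v, 0 ≤ x v ∧ x v ≤ xbar v) ∧
        (∀ ω v, 0 ≤ g ω v ∧ g ω v ≤ α ω v * (gbar v + x v)) ∧
        (∀ ω v, 0 ≤ s ω v ∧ s ω v ≤ d ω v) ∧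
        (∀ ω u v, f ω (u, v) = - f ω (v, u)) ∧
        (∀ ω u v, |f ω (u, v)| ≤ U (u, v)) ∧
        (∀ ω (v : V), g ω v + s ω v + (∑ u : V, f ω (u, v)) = d ω v) ∧
        t = (∑ v : V, k v * x v)
            + ∑ ω : Ω, prob ω * ∑ v : V, (c v * g ω v + p * s ω v) } :=
  aggregated_stochastic_model_is_relaxation_general q prob hprob xbar k gbar c p d α U hxbar hk
    hgbar hc hp hd hα hUnonneg
end
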